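/- (Lemma 5, exact penalty for consensus of multipliers.) If K > √N K₀, then for every x ∈ Ω the set of maximizers of λ ↦ L̃(x, λ) over (ℝ^M_+)^N coincides with the set of maximizers of λ ↦ L̃(x, λ) over the consensus set S. -/

import Mathlib

/-!
Replacing the multipliers `λᵢ` by their mean `λ̄` kills the penalty `K φ(λ)` and changes
`∑ᵢ ⟪λᵢ, gᵢ(xᵢ)⟫` by `∑ᵢ ⟪λᵢ - λ̄, gᵢ(xᵢ)⟫ ≤ √N K₀ φ(λ)`, since each `‖λᵢ - λ̄‖` is at most
`max_j ‖λᵢ - λⱼ‖₁ ≤ φ(λ)`: along a path of the connected graph, the `ℓ¹` distance between two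
multipliers is at most the sum of the edge terms of `φ`. So for `K > √N K₀` averaging raises `L̃` by
`(K - √N K₀) φ(λ)`, strictly unless `λ` is already consensual, and both problems have the same
maximizers.
-/

open scoped RealInnerProductSpace

open Finset

namespace SimpleGraph

variable {V : Type*} {G : SimpleGraph V}

section Weights

variable {E : Type*} [SeminormedAddCommGroup E]

def edgeNormSub (f : V → E) : Sym2 V → ℝ :=
  Sym2.lift ⟨fun a b => ‖f a - f b‖, fun _ _ => norm_sub_rev _ _⟩

theorem Walk.norm_sub_le_sum_edgeNormSub (f : V → E) {u v : V} (p : G.Walk u v) :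
    ‖f u - f v‖ ≤ (p.edges.map (edgeNormSub f)).sum := by
  induction p with
  | nil => simp
  | cons _ q ih =>
    rw [Walk.edges_cons, List.map_cons, List.sum_cons]
    exact (norm_sub_le_norm_sub_add_norm_sub _ _ _).trans (add_le_add le_rfl ih)

variable [Fintype V] [DecidableRel G.Adj]

theorem Walk.IsTrail.sum_edgeNormSub_le (f : V → E) {u v : V} {p : G.Walk u v}
    (hp : p.IsTrail) :
    (p.edges.map (edgeNormSub f)).sum ≤ ∑ e ∈ G.edgeFinset, edgeNormSub f e := by
  classical
  rw [← List.sum_toFinset _ hp.edges_nodup]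
  refine sum_le_sum_of_subset_of_nonneg (fun e he => ?_) fun e _ _ => ?_
  · exact mem_edgeFinset.2 (p.edges_subset_edgeSet (List.mem_toFinset.1 he))
  · induction e using Sym2.ind with | h a b => exact norm_nonneg (f a - f b)

end Weights

variable [Fintype V] [DecidableRel G.Adj]

theorem sum_sum_neighborFinset_eq_sum_dart {M : Type*} [AddCommMonoid M] (F : V → V → M) :
    ∑ a, ∑ b ∈ G.neighborFinset a, F a b = ∑ d : G.Dart, F d.fst d.snd := by
  classical
  rw [← sum_fiberwise (s := univ) (g := fun d : G.Dart => d.fst)]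
  refine sum_congr rfl fun a _ => ?_
  rw [G.dart_fst_fiber a, sum_image fun _ _ _ _ h => G.dartOfNeighborSet_injective a h]
  exact sum_subtype _ (fun b => by simp) _

theorem sum_dart_edge_eq_two_nsmul {M : Type*} [AddCommMonoid M] (w : Sym2 V → M) :
    ∑ d : G.Dart, w d.edge = 2 • ∑ e ∈ G.edgeFinset, w e := by
  classical
  rw [← sum_fiberwise_of_maps_to (s := univ) (t := G.edgeFinset) (g := Dart.edge)
    (fun d _ => mem_edgeFinset.2 d.edge_mem), smul_sum]
  refine sum_congr rfl fun e he => ?_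
  rw [sum_congr rfl fun d hd => congrArg w (mem_filter.1 hd).2, sum_const,
    G.dart_edge_fiber_card e (mem_edgeFinset.1 he)]

/-- Each edge is counted twice on the right, while a path between `i` and `j` uses it at most
once. -/
theorem Connected.norm_sub_le_half_sum_neighborFinset {E : Type*} [SeminormedAddCommGroup E]
    (hG : G.Connected) (f : V → E) (i j : V) :
    ‖f i - f j‖ ≤ (1 / 2) * ∑ a, ∑ b ∈ G.neighborFinset a, ‖f a - f b‖ := by
  obtain ⟨p, hp⟩ := hG.preconnected.exists_isPath i j
  have htotal : ∑ a, ∑ b ∈ G.neighborFinset a, ‖f a - f b‖ =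
      2 * ∑ e ∈ G.edgeFinset, edgeNormSub f e := by
    rw [sum_sum_neighborFinset_eq_sum_dart]
    calc _ = ∑ d : G.Dart, edgeNormSub f d.edge := rfl
      _ = _ := by rw [sum_dart_edge_eq_two_nsmul, two_nsmul, two_mul]
  rw [htotal]
  linarith [p.norm_sub_le_sum_edgeNormSub f, hp.isTrail.sum_edgeNormSub_le f]

end SimpleGraph

theorem EuclideanSpace.norm_le_sum_abs {κ : Type*} [Fintype κ] (v : EuclideanSpace ℝ κ) :
    ‖v‖ ≤ ∑ m, |v m| := by
  rw [EuclideanSpace.norm_eq, Real.sqrt_le_left (by positivity)]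
  simpa only [Real.norm_eq_abs] using sum_sq_le_sq_sum_of_nonneg fun m _ => abs_nonneg (v m)

section CenterMass

variable {ι : Type*} [Fintype ι]

theorem centerMass_one_apply_nonneg {κ : Type*} (lam : ι → EuclideanSpace ℝ κ)
    (h : ∀ i m, 0 ≤ lam i m) (m : κ) : 0 ≤ (univ.centerMass (1 : ι → ℝ) lam) m := by
  simp only [centerMass, Pi.one_apply, one_smul, PiLp.smul_apply, WithLp.ofLp_sum,
    Finset.sum_apply, smul_eq_mul]
  exact mul_nonneg (by positivity) (sum_nonneg fun i _ => h i m)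

theorem norm_sub_centerMass_one_le {E : Type*} [SeminormedAddCommGroup E] [NormedSpace ℝ E]
    (lam : ι → E) {r : ℝ} (i : ι)
    (h : ∀ j, ‖lam i - lam j‖ ≤ r) : ‖lam i - univ.centerMass (1 : ι → ℝ) lam‖ ≤ r := by
  have hmem : univ.centerMass (1 : ι → ℝ) lam ∈ Metric.closedBall (lam i) r :=
    (convex_closedBall _ _).centerMass_mem (fun _ _ => zero_le_one)
      (by simpa using Fintype.card_pos_iff.2 ⟨i⟩)
      fun j _ => by rw [Metric.mem_closedBall, dist_eq_norm, norm_sub_rev]; exact h j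
  rwa [Metric.mem_closedBall, dist_eq_norm, norm_sub_rev] at hmem

theorem sum_inner_le_sqrt_card_mul {E : Type*} [NormedAddCommGroup E] [InnerProductSpace ℝ E]
    (u v : ι → E) {r : ℝ} (hr : 0 ≤ r) (hu : ∀ i, ‖u i‖ ≤ r) :
    ∑ i, ⟪u i, v i⟫ ≤ √(Fintype.card ι) * r * √(∑ i, ‖v i‖ ^ 2) := by
  have hu2 : √(∑ i, ‖u i‖ ^ 2) ≤ √(Fintype.card ι) * r := by
    rw [← Real.sqrt_sq hr, ← Real.sqrt_mul (Nat.cast_nonneg _)]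
    refine Real.sqrt_le_sqrt ?_
    calc ∑ i, ‖u i‖ ^ 2 ≤ ∑ _i : ι, r ^ 2 := by gcongr with i; exact hu i
      _ = _ := by simp
  calc ∑ i, ⟪u i, v i⟫ ≤ ∑ i, ‖u i‖ * ‖v i‖ := by gcongr with i; exact real_inner_le_norm _ _
    _ ≤ √(∑ i, ‖u i‖ ^ 2) * √(∑ i, ‖v i‖ ^ 2) := Real.sum_mul_le_sqrt_mul_sqrt _ _ _
    _ ≤ _ := by gcongr

end CenterMass

section ConsensusPenalty

variable {V κ : Type*} [Fintype V] [Fintype κ] {G : SimpleGraph V} [DecidableRel G.Adj]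

variable (G) in
noncomputable def consensusPenalty (lam : V → EuclideanSpace ℝ κ) : ℝ :=
  (1 / 2) * ∑ i, ∑ j ∈ G.neighborFinset i, ∑ m, |lam i m - lam j m|

theorem consensusPenalty_nonneg (lam : V → EuclideanSpace ℝ κ) : 0 ≤ consensusPenalty G lam := by
  unfold consensusPenalty; positivity

theorem consensusPenalty_const (v : EuclideanSpace ℝ κ) :
    consensusPenalty G (fun _ : V => v) = 0 := by
  simp [consensusPenalty]

theorem SimpleGraph.Connected.norm_sub_le_consensusPenalty (hG : G.Connected)
    (lam : V → EuclideanSpace ℝ κ) (i j : V) : ‖lam i - lam j‖ ≤ consensusPenalty G lam := by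
  have hℓ1 : ∀ a b, ∑ m, |lam a m - lam b m| =
      ‖WithLp.toLp 1 (WithLp.ofLp (lam a)) - WithLp.toLp 1 (WithLp.ofLp (lam b))‖ := by
    intro a b
    simp [PiLp.norm_eq_of_L1]
  calc ‖lam i - lam j‖ ≤ ∑ m, |lam i m - lam j m| := by
        simpa only [PiLp.sub_apply] using EuclideanSpace.norm_le_sum_abs (lam i - lam j)
    _ ≤ consensusPenalty G lam := by
        simp only [consensusPenalty, hℓ1]
        exact hG.norm_sub_le_half_sum_neighborFinset
          (fun a => WithLp.toLp 1 (WithLp.ofLp (lam a))) i j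

theorem SimpleGraph.Connected.consensusPenalty_pos (hG : G.Connected)
    {lam : V → EuclideanSpace ℝ κ} {i j : V} (hij : lam i ≠ lam j) : 0 < consensusPenalty G lam :=
  (norm_pos_iff.2 (sub_ne_zero.2 hij)).trans_le (hG.norm_sub_le_consensusPenalty lam i j)

theorem SimpleGraph.Connected.sum_inner_sub_centerMass_le (hG : G.Connected)
    (lam g : V → EuclideanSpace ℝ κ) :
    ∑ i, ⟪lam i - univ.centerMass (1 : V → ℝ) lam, g i⟫ ≤
      √(Fintype.card V) * consensusPenalty G lam * √(∑ i, ‖g i‖ ^ 2) :=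
  sum_inner_le_sqrt_card_mul _ _ (consensusPenalty_nonneg lam) fun i =>
    norm_sub_centerMass_one_le lam i fun j => hG.norm_sub_le_consensusPenalty lam i j

end ConsensusPenalty

theorem setOf_maximizers_eq_of_exists_improvement {α : Type*} (F : α → ℝ) (P S : α → Prop)
    (hSP : ∀ a, S a → P a) (h : ∀ a, P a → ∃ b, S b ∧ F a ≤ F b ∧ (¬ S a → F a < F b)) :
    {a | P a ∧ ∀ b, P b → F b ≤ F a} = {a | S a ∧ ∀ b, S b → F b ≤ F a} := by
  ext a
  refine ⟨fun ⟨hPa, hmax⟩ => ⟨?_, fun b hb => hmax b (hSP b hb)⟩,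
    fun ⟨hSa, hmax⟩ => ⟨hSP a hSa, fun b hb => ?_⟩⟩
  · obtain ⟨b, hSb, -, hlt⟩ := h a hPa
    by_contra hSa
    exact (hlt hSa).not_ge (hmax b (hSP b hSb))
  · obtain ⟨c, hSc, hbc, -⟩ := h b hb
    exact hbc.trans (hmax c hSc)

theorem stmt_2_general (N M : ℕ) (n : Fin N → ℕ)
    (G : SimpleGraph (Fin N)) [DecidableRel G.Adj] (hG : G.Connected)
    (Ω : ∀ i, Set (EuclideanSpace ℝ (Fin (n i))))
    (f : ∀ i, EuclideanSpace ℝ (Fin (n i)) → ℝ)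
    (g : ∀ i, EuclideanSpace ℝ (Fin (n i)) → EuclideanSpace ℝ (Fin M))
    -- the penalty constant `K₀ = max_{x ∈ Ω} ‖(g_1(x_1),…,g_N(x_N))‖` and `K > √N K₀`
    (K₀ K : ℝ)
    (hK₀ : IsGreatest {r | ∃ x : ∀ i, EuclideanSpace ℝ (Fin (n i)),
      (∀ i, x i ∈ Ω i) ∧ r = Real.sqrt (∑ i, ‖g i (x i)‖ ^ 2)} K₀)
    (hK : Real.sqrt N * K₀ < K)
    -- the consensus penalty and the modified Lagrangian
    (φ : (Fin N → EuclideanSpace ℝ (Fin M)) → ℝ)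
    (hφ : ∀ lam, φ lam = (1 / 2) * ∑ i, ∑ j ∈ G.neighborFinset i, ∑ m, |lam i m - lam j m|)
    (Lt : (∀ i, EuclideanSpace ℝ (Fin (n i))) → (Fin N → EuclideanSpace ℝ (Fin M)) → ℝ)
    (hLt : ∀ x lam, Lt x lam = (∑ i, (f i (x i) + ⟪lam i, g i (x i)⟫)) - K * φ lam) :
    ∀ x : ∀ i, EuclideanSpace ℝ (Fin (n i)), (∀ i, x i ∈ Ω i) →
      {lam : Fin N → EuclideanSpace ℝ (Fin M) | (∀ i m, 0 ≤ lam i m) ∧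
          ∀ μ : Fin N → EuclideanSpace ℝ (Fin M), (∀ i m, 0 ≤ μ i m) → Lt x μ ≤ Lt x lam}
        = {lam : Fin N → EuclideanSpace ℝ (Fin M) |
            ((∀ i m, 0 ≤ lam i m) ∧ ∀ i j, lam i = lam j) ∧
            ∀ μ : Fin N → EuclideanSpace ℝ (Fin M),
              ((∀ i m, 0 ≤ μ i m) ∧ ∀ i j, μ i = μ j) → Lt x μ ≤ Lt x lam} := by
  intro x hx
  have hgK₀ : √(∑ i, ‖g i (x i)‖ ^ 2) ≤ K₀ := hK₀.2 ⟨x, hx, rfl⟩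
  obtain rfl : φ = consensusPenalty G := funext hφ
  refine setOf_maximizers_eq_of_exists_improvement (Lt x) _ _ (fun _ h => h.1) fun lam hlam => ?_
  have hCS : ∑ i, ⟪lam i - univ.centerMass (1 : Fin N → ℝ) lam, g i (x i)⟫ ≤
      √N * K₀ * consensusPenalty G lam := by
    have hpen := consensusPenalty_nonneg (G := G) lam
    calc _ ≤ √N * consensusPenalty G lam * √(∑ i, ‖g i (x i)‖ ^ 2) := by
          simpa only [Fintype.card_fin] using hG.sum_inner_sub_centerMass_le lam fun i => g i (x i)
      _ ≤ √N * consensusPenalty G lam * K₀ := by gcongr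
      _ = _ := by ring
  set avg := univ.centerMass (1 : Fin N → ℝ) lam
  have hgain : Lt x lam + (K - √N * K₀) * consensusPenalty G lam ≤ Lt x fun _ => avg := by
    have hsplit : ∑ i, (f i (x i) + ⟪avg, g i (x i)⟫) =
        ∑ i, (f i (x i) + ⟪lam i, g i (x i)⟫) - ∑ i, ⟪lam i - avg, g i (x i)⟫ := by
      simp only [inner_sub_left, sum_add_distrib, sum_sub_distrib]
      ring
    rw [hLt, hLt, consensusPenalty_const, hsplit]
    linarith
  have hmargin : 0 < K - √N * K₀ := sub_pos.2 hK
  refine ⟨fun _ => avg, ⟨fun _ => centerMass_one_apply_nonneg lam hlam, fun _ _ => rfl⟩, ?_,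
    fun hne => ?_⟩
  · linarith [mul_nonneg hmargin.le (consensusPenalty_nonneg (G := G) lam)]
  · obtain ⟨i, j, hij⟩ : ∃ i j, lam i ≠ lam j := by
      by_contra! hcons
      exact hne ⟨hlam, hcons⟩
    linarith [mul_pos hmargin (hG.consensusPenalty_pos hij)]

/-- (Lemma 5, exact penalty for consensus of multipliers.) If `K > √N K₀`, then for every
`x ∈ Ω` the set of maximizers of `λ ↦ L̃(x, λ)` over the orthant `(ℝ^M_+)^N` coincides
with the set of maximizers of `λ ↦ L̃(x, λ)` over the consensus set
`S = {λ ∈ (ℝ^M_+)^N : λ_1 = ⋯ = λ_N}`. -/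
theorem stmt_2 (N M : ℕ) (hN : 0 < N) (n : Fin N → ℕ)
    (G : SimpleGraph (Fin N)) [DecidableRel G.Adj] (hG : G.Connected)
    (Ω U : ∀ i, Set (EuclideanSpace ℝ (Fin (n i))))
    (f : ∀ i, EuclideanSpace ℝ (Fin (n i)) → ℝ)
    (g : ∀ i, EuclideanSpace ℝ (Fin (n i)) → EuclideanSpace ℝ (Fin M))
    (hΩcomp : ∀ i, IsCompact (Ω i)) (hΩconv : ∀ i, Convex ℝ (Ω i))
    (hΩne : ∀ i, (Ω i).Nonempty)
    (hUopen : ∀ i, IsOpen (U i)) (hΩU : ∀ i, Ω i ⊆ U i)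
    (hf : ∀ i, StrictConvexOn ℝ (U i) (f i)) (hflip : ∀ i, LocallyLipschitzOn (U i) (f i))
    (hg : ∀ i k, ConvexOn ℝ (U i) fun z => g i z k)
    (hglip : ∀ i, LocallyLipschitzOn (U i) (g i))
    -- the penalty constant `K₀ = max_{x ∈ Ω} ‖(g_1(x_1),…,g_N(x_N))‖` and `K > √N K₀`
    (K₀ K : ℝ)
    (hK₀ : IsGreatest {r | ∃ x : ∀ i, EuclideanSpace ℝ (Fin (n i)),
      (∀ i, x i ∈ Ω i) ∧ r = Real.sqrt (∑ i, ‖g i (x i)‖ ^ 2)} K₀)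
    (hK : Real.sqrt N * K₀ < K)
    -- the consensus penalty and the modified Lagrangian
    (φ : (Fin N → EuclideanSpace ℝ (Fin M)) → ℝ)
    (hφ : ∀ lam, φ lam = (1 / 2) * ∑ i, ∑ j ∈ G.neighborFinset i, ∑ m, |lam i m - lam j m|)
    (Lt : (∀ i, EuclideanSpace ℝ (Fin (n i))) → (Fin N → EuclideanSpace ℝ (Fin M)) → ℝ)
    (hLt : ∀ x lam, Lt x lam = (∑ i, (f i (x i) + ⟪lam i, g i (x i)⟫)) - K * φ lam) :
    ∀ x : ∀ i, EuclideanSpace ℝ (Fin (n i)), (∀ i, x i ∈ Ω i) →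
      {lam : Fin N → EuclideanSpace ℝ (Fin M) | (∀ i m, 0 ≤ lam i m) ∧
          ∀ μ : Fin N → EuclideanSpace ℝ (Fin M), (∀ i m, 0 ≤ μ i m) → Lt x μ ≤ Lt x lam}
        = {lam : Fin N → EuclideanSpace ℝ (Fin M) |
            ((∀ i m, 0 ≤ lam i m) ∧ ∀ i j, lam i = lam j) ∧
            ∀ μ : Fin N → EuclideanSpace ℝ (Fin M),
              ((∀ i m, 0 ≤ μ i m) ∧ ∀ i j, μ i = μ j) → Lt x μ ≤ Lt x lam} :=
  stmt_2_general N M n G hG Ω f g K₀ K hK₀ hK φ hφ Lt hLt
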